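/- arXiv:1006.5445 — 5 statements merged into one kernel-verified Lean document; each statement's English description precedes it below -/
import Mathlib

section
/- Let Σ ∈ ℂ^{n×n} be positive semidefinite with Tr(Σ) > 0, and let M be a natural number with M ≥ 1 and M ≥ rank(Σ). Then there exist unit vectors t_1, …, t_M ∈ ℂ^n such that Σ = ∑_{m=1}^M p_m t_m t_m† with p_m = Tr(Σ)/M for every m; that is, Σ can be decomposed into M rank-one streams over which the transmit power is uniformly allocated. -/
open Matrix BigOperators
open scoped ComplexOrder

/-!
Diagonalise `S = U diag(λ) U†`. Since at most `M` eigenvalues are nonzero, the vectors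
`√λᵢ uᵢ` can be placed in distinct columns of an `n × M` matrix `B`, so that `S = B B†` and the
columns of `B` are pairwise orthogonal. Mixing them with the `M × M` Fourier matrix `F`
(`F F† = M • 1`, all entries of modulus one) gives `W = B F` with `W W† = M • S`, and by the
orthogonality every column of `W` has squared norm `∑ₖ ‖bₖ‖² = Tr S`. The streams are the columns
of `W` scaled by `1 / √(Tr S)`.
-/

namespace Matrix

variable {m n κ α 𝕜 : Type*}

theorem mul_conjTranspose_eq_sum_vecMulVec [Fintype κ] [NonUnitalNonAssocSemiring α] [Star α]
    (A : Matrix m κ α) : A * Aᴴ = ∑ k, vecMulVec (Aᵀ k) (star (Aᵀ k)) := by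
  ext i j
  simp [mul_apply, sum_apply, vecMulVec_apply]

theorem conjTranspose_mul_diagonal_mul_apply_self [Fintype κ] [DecidableEq κ] [RCLike 𝕜]
    (F : Matrix κ m 𝕜) (hF : ∀ k j, ‖F k j‖ = 1) (d : κ → 𝕜) (j : m) :
    (Fᴴ * diagonal d * F) j j = ∑ k, d k := by
  rw [mul_apply]
  refine Finset.sum_congr rfl fun k _ => ?_
  rw [mul_diagonal, conjTranspose_apply, mul_right_comm, RCLike.star_def, RCLike.conj_mul, hF,
    RCLike.ofReal_one, one_pow, one_mul]

def singleEntryRows [DecidableEq κ] [Zero α] (σ : n → κ) (c : n → α) : Matrix n κ α :=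
  of fun i k => if σ i = k then c i else 0

section singleEntryRows

variable [DecidableEq κ] [NonUnitalNonAssocSemiring α] [StarRing α]

theorem isDiag_conjTranspose_mul_singleEntryRows [Fintype n] (σ : n → κ) (c : n → α) :
    ((singleEntryRows σ c)ᴴ * singleEntryRows σ c).IsDiag := by
  intro k l hkl
  refine Finset.sum_eq_zero fun i _ => ?_
  by_cases hk : σ i = k
  · simp [singleEntryRows, hk, hkl]
  · simp [singleEntryRows, hk]

theorem singleEntryRows_mul_conjTranspose [Fintype κ] [DecidableEq n] {σ : n → κ} {c : n → α}
    (hσ : Set.InjOn σ {i | c i ≠ 0}) :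
    singleEntryRows σ c * (singleEntryRows σ c)ᴴ = diagonal fun i => c i * star (c i) := by
  ext i j
  simp only [singleEntryRows, mul_apply, of_apply, conjTranspose_apply, apply_ite star, star_zero,
    mul_ite, ite_mul, zero_mul, mul_zero, Finset.sum_ite_eq, Finset.mem_univ, ↓reduceIte,
    diagonal_apply]
  by_cases hij : i = j
  · simp [hij]
  rw [if_neg hij, ite_eq_right_iff]
  intro hσij
  by_contra hne
  exact hij (hσ (left_ne_zero_of_mul hne) (fun hj => by simp [hj] at hne) hσij)

end singleEntryRows

theorem PosSemidef.exists_eq_mul_conjTranspose_isDiag [Fintype n] [DecidableEq n] [Fintype κ]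
    [Nonempty κ] [RCLike 𝕜] {S : Matrix n n 𝕜} (hS : S.PosSemidef)
    (hrank : S.rank ≤ Fintype.card κ) :
    ∃ B : Matrix n κ 𝕜, S = B * Bᴴ ∧ (Bᴴ * B).IsDiag := by
  classical
  set ev := hS.1.eigenvalues
  obtain ⟨f⟩ : Nonempty ({i // ev i ≠ 0} ↪ κ) :=
    Function.Embedding.nonempty_of_card_le (hS.1.rank_eq_card_non_zero_eigs ▸ hrank)
  let σ : n → κ := fun i => if h : ev i ≠ 0 then f ⟨i, h⟩ else Classical.arbitrary κ
  let c : n → 𝕜 := fun i => (√(ev i) : 𝕜)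
  have hc : ∀ i, c i ≠ 0 → ev i ≠ 0 := fun i hi hev => hi (by simp [c, hev])
  have hσ : Set.InjOn σ {i | c i ≠ 0} := fun i hi j hj hij =>
    congrArg Subtype.val
      (f.injective (by simpa only [σ, dif_pos (hc i hi), dif_pos (hc j hj)] using hij))
  let U : Matrix n n 𝕜 := hS.1.eigenvectorUnitary
  have hU : star U * U = 1 := Unitary.coe_star_mul_self _
  refine ⟨U * singleEntryRows σ c, ?_, ?_⟩
  · have hcc : (fun i => c i * star (c i)) = RCLike.ofReal ∘ ev := by
      ext i
      rw [Function.comp_apply, RCLike.star_def, RCLike.conj_ofReal, ← RCLike.ofReal_mul,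
        Real.mul_self_sqrt (hS.eigenvalues_nonneg i)]
    calc S = U * diagonal (RCLike.ofReal ∘ ev) * Uᴴ := by
          conv_lhs => rw [hS.1.spectral_theorem, Unitary.conjStarAlgAut_apply]
          simp only [U, ev, Matrix.mul_assoc, star_eq_conjTranspose]
      _ = U * singleEntryRows σ c * (U * singleEntryRows σ c)ᴴ := by
          rw [← hcc, ← singleEntryRows_mul_conjTranspose hσ, conjTranspose_mul]
          simp only [Matrix.mul_assoc]
  · rw [conjTranspose_mul, Matrix.mul_assoc, ← Matrix.mul_assoc _ U, ← star_eq_conjTranspose, hU,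
      Matrix.one_mul]
    exact isDiag_conjTranspose_mul_singleEntryRows σ c

end Matrix

theorem sum_fin_pow_eq_zero_of_pow_eq_one {R : Type*} [CommRing R] [IsDomain R] {M : ℕ} {ζ : R}
    (hζ : ζ ^ M = 1) (hζ1 : ζ ≠ 1) : ∑ m : Fin M, ζ ^ (m : ℕ) = 0 := by
  have h := geom_sum_mul ζ M
  rw [hζ, sub_self] at h
  rw [Fin.sum_univ_eq_sum_range (ζ ^ ·)]
  exact (mul_eq_zero.1 h).resolve_right (sub_ne_zero.2 hζ1)

def dftMatrix (ζ : ℂ) (M : ℕ) : Matrix (Fin M) (Fin M) ℂ := of fun k m => ζ ^ ((k : ℕ) * m)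

namespace IsPrimitiveRoot

variable {ζ : ℂ} {M : ℕ}

theorem norm_dftMatrix_apply (hζ : IsPrimitiveRoot ζ M) (k m : Fin M) :
    ‖dftMatrix ζ M k m‖ = 1 := by
  rw [dftMatrix, of_apply, norm_pow, hζ.norm'_eq_one k.pos.ne', one_pow]

theorem dftMatrix_mul_conjTranspose (hζ : IsPrimitiveRoot ζ M) :
    dftMatrix ζ M * (dftMatrix ζ M)ᴴ = (M : ℂ) • 1 := by
  ext k l
  have hinv : ∀ j : ℕ, star (ζ ^ j) = (ζ ^ j)⁻¹ := fun j =>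
    (Complex.inv_eq_conj (by rw [norm_pow, hζ.norm'_eq_one k.pos.ne', one_pow])).symm
  have hterm : ∀ m : Fin M,
      dftMatrix ζ M k m * (dftMatrix ζ M)ᴴ m l = (ζ ^ (k : ℕ) * (ζ ^ (l : ℕ))⁻¹) ^ (m : ℕ) := by
    intro m
    simp only [dftMatrix, conjTranspose_apply, of_apply, hinv, mul_pow, inv_pow, ← pow_mul]
  rw [mul_apply, Finset.sum_congr rfl fun m _ => hterm m, Matrix.smul_apply, one_apply,
    smul_eq_mul]
  by_cases hkl : k = l
  · simp [hkl, hζ.ne_zero k.pos.ne']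
  · rw [if_neg hkl, mul_zero]
    refine sum_fin_pow_eq_zero_of_pow_eq_one ?_ ?_
    · rw [mul_pow, inv_pow, ← pow_mul, ← pow_mul, pow_mul', pow_mul' _ l, hζ.pow_eq_one, one_pow,
        one_pow, inv_one, mul_one]
    · rw [Ne, mul_inv_eq_one₀ (pow_ne_zero _ (hζ.ne_zero k.pos.ne'))]
      exact fun h => hkl (Fin.ext (hζ.pow_inj k.isLt l.isLt h))

end IsPrimitiveRoot

theorem Matrix.PosSemidef.exists_sum_vecMulVec_eq_smul_of_rank_le {n : Type*} [Fintype n]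
    [DecidableEq n] {S : Matrix n n ℂ} (hS : S.PosSemidef) {M : ℕ} (hM : M ≠ 0)
    (hrank : S.rank ≤ M) :
    ∃ w : Fin M → n → ℂ, (∀ m, star (w m) ⬝ᵥ w m = S.trace) ∧
      M • S = ∑ m, vecMulVec (w m) (star (w m)) := by
  have : NeZero M := ⟨hM⟩
  obtain ⟨B, hSB, hB⟩ :=
    hS.exists_eq_mul_conjTranspose_isDiag (κ := Fin M) (by rwa [Fintype.card_fin])
  have hζ := Complex.isPrimitiveRoot_exp M hM
  set F := dftMatrix (Complex.exp (2 * Real.pi * Complex.I / M)) M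
  set W := B * F with hW
  refine ⟨Wᵀ, fun m => ?_, ?_⟩
  · calc star (Wᵀ m) ⬝ᵥ Wᵀ m = (Wᴴ * W) m m := rfl
      _ = (Fᴴ * diagonal (Bᴴ * B).diag * F) m m := by
          rw [hB.diagonal_diag, conjTranspose_mul, hW]
          simp only [Matrix.mul_assoc]
      _ = S.trace := by
          rw [conjTranspose_mul_diagonal_mul_apply_self F hζ.norm_dftMatrix_apply, hSB,
            trace_mul_comm]
          rfl
  · rw [← mul_conjTranspose_eq_sum_vecMulVec, conjTranspose_mul, Matrix.mul_assoc,
      ← Matrix.mul_assoc F, hζ.dftMatrix_mul_conjTranspose, Matrix.smul_mul, Matrix.one_mul,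
      Matrix.mul_smul, ← hSB, Nat.cast_smul_eq_nsmul]

/-- Any positive semidefinite covariance matrix `S` with positive trace can be
decomposed into `M` rank-one streams (`M ≥ 1`, `M ≥ rank S`) over unit transmit vectors with
uniform power allocation `p_m = Tr(S)/M`. -/
theorem equal_power_decomposition {n : ℕ}
    (S : Matrix (Fin n) (Fin n) ℂ) (hS : S.PosSemidef)
    (htr : 0 < S.trace.re)
    (M : ℕ) (hM1 : 1 ≤ M) (hMrank : S.rank ≤ M) :
    ∃ t : Fin M → (Fin n → ℂ),
      (∀ m : Fin M, star (t m) ⬝ᵥ t m = 1) ∧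
      S = ∑ m : Fin M, (S.trace.re / (M : ℝ)) • vecMulVec (t m) (star (t m)) := by
  have hM : M ≠ 0 := Nat.one_le_iff_ne_zero.1 hM1
  obtain ⟨w, hw, hsum⟩ := hS.exists_sum_vecMulVec_eq_smul_of_rank_le hM hMrank
  set τ := S.trace.re
  have htrace : S.trace = τ := Complex.eq_re_of_ofReal_le hS.trace_nonneg
  have hsqrt : (√τ)⁻¹ * (√τ)⁻¹ = τ⁻¹ := by rw [← mul_inv, Real.mul_self_sqrt htr.le]
  refine ⟨fun m => (√τ)⁻¹ • w m, fun m => ?_, ?_⟩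
  · rw [star_smul, star_trivial, smul_dotProduct, dotProduct_smul, hw, htrace, smul_smul, hsqrt,
      Complex.real_smul, ← Complex.ofReal_mul, inv_mul_cancel₀ htr.ne', Complex.ofReal_one]
  · simp only [star_smul, star_trivial, smul_vecMulVec, vecMulVec_smul, smul_smul]
    rw [hsqrt, show τ / M * τ⁻¹ = (M : ℝ)⁻¹ by field_simp, ← Finset.smul_sum, ← hsum,
      ← Nat.cast_smul_eq_nsmul ℝ, inv_smul_smul₀ (Nat.cast_ne_zero.2 hM)]
end

section
/- Let I_l^0 > 0 be target rates and suppose Σ̃_{1:L} is a family of positive semidefinite input covariance matrices that solves the sum power minimization problem SPMP, i.e., I_l(Σ̃_{1:L}, Φ) ≥ I_l^0 for all l, and ∑_l Tr(Σ̃_l) ≤ ∑_l Tr(Σ_l) for every family of positive semidefinite Σ_{1:L} with I_l(Σ_{1:L}, Φ) ≥ I_l^0 for all l. Then all rate constraints are tight at the optimum: I_l(Σ̃_{1:L}, Φ) = I_l^0 for every l. -/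
open Matrix BigOperators
open scoped ComplexOrder

/-- Interference-plus-noise covariance `Ω_l = I + ∑ₖ Φ_{l,k} H_{l,k} Σ_k H_{l,k}ᴴ`
of link `l` in a B-MAC network. -/
noncomputable def interfCov {L : ℕ} (nT nR : Fin L → ℕ)
    (H : ∀ l k : Fin L, Matrix (Fin (nR l)) (Fin (nT k)) ℂ)
    (Φ : Fin L → Fin L → ℝ)
    (S : ∀ l : Fin L, Matrix (Fin (nT l)) (Fin (nT l)) ℂ) (l : Fin L) :
    Matrix (Fin (nR l)) (Fin (nR l)) ℂ :=
  1 + ∑ k : Fin L, (Φ l k : ℂ) • (H l k * S k * (H l k)ᴴ)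

/-- Achievable rate `I_l(Σ_{1:L}, Φ) = log det(I + H_{l,l} Σ_l H_{l,l}ᴴ Ω_l⁻¹)` of link `l`. -/
noncomputable def linkRate {L : ℕ} (nT nR : Fin L → ℕ)
    (H : ∀ l k : Fin L, Matrix (Fin (nR l)) (Fin (nT k)) ℂ)
    (Φ : Fin L → Fin L → ℝ)
    (S : ∀ l : Fin L, Matrix (Fin (nT l)) (Fin (nT l)) ℂ) (l : Fin L) : ℝ :=
  Real.log ((1 + H l l * S l * (H l l)ᴴ * (interfCov nT nR H Φ S l)⁻¹).det.re)

/-!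
If some rate constraint were slack at the optimum, say on link `l₀`, scale `Σ̃_{l₀}` by a factor
`t < 1` close to `1`. Since `Φ_{l₀,l₀} = 0`, the rate of `l₀` depends continuously on `t` only
through its own signal term, so it still exceeds `I_{l₀}⁰`. Every other link sees less
interference, and in the Loewner order `Ω ↦ det(I + A Ω⁻¹)` is antitone (the inverse is antitone,
and the determinant is monotone on positive definite matrices), so its rate does not drop. The
scaled family is feasible with strictly smaller total power, since `Σ̃_{l₀} ≠ 0` because
`I_{l₀}⁰ > 0`.
-/

open scoped MatrixOrder

namespace Matrix

variable {n : Type*}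

theorem PosDef.of_le {P Q : Matrix n n ℂ} (hP : P.PosDef) (hPQ : P ≤ Q) : Q.PosDef := by
  simpa using hP.add_posSemidef (le_iff.mp hPQ)

theorem PosSemidef.smul_le_self {A : Matrix n n ℂ} (hA : A.PosSemidef) {t : ℝ} (ht : t ≤ 1) :
    (t : ℂ) • A ≤ A := by
  have h : A - (t : ℂ) • A = ((1 - t : ℝ) : ℂ) • A := by
    rw [Complex.ofReal_sub, Complex.ofReal_one, sub_smul, one_smul]
  rw [le_iff, h]
  exact hA.smul (Complex.zero_le_real.mpr (sub_nonneg.mpr ht))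

variable [Fintype n]

theorem PosSemidef.trace_re_pos {A : Matrix n n ℂ} (hA : A.PosSemidef) (h : A ≠ 0) :
    0 < A.trace.re :=
  (Complex.pos_iff.mp (hA.trace_nonneg.lt_of_ne (Ne.symm (hA.trace_eq_zero_iff.not.mpr h)))).1

-- Determinant inequalities are in `ComplexOrder`, so they also assert that both sides are real.
variable [DecidableEq n]

theorem PosSemidef.one_le_det_one_add {M : Matrix n n ℂ} (hM : M.PosSemidef) :
    1 ≤ (1 + M).det := by
  have h : 1 + M = cfc (fun x : ℝ ↦ 1 + x) M := by
    rw [cfc_add .., cfc_const_one .., cfc_id' ..]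
  rw [h, hM.1.cfc_eq]
  simp only [IsHermitian.cfc, det_map, det_diagonal, Function.comp_apply, RCLike.ofReal_add,
    RCLike.ofReal_one]
  exact Finset.one_le_prod fun i _ ↦
    le_add_of_nonneg_right (Complex.zero_le_real.mpr (hM.eigenvalues_nonneg i))

theorem PosSemidef.det_one_add_sqrt_mul_mul_sqrt {A : Matrix n n ℂ} (hA : A.PosSemidef)
    (B : Matrix n n ℂ) : (1 + CFC.sqrt A * B * CFC.sqrt A).det = (1 + A * B).det := by
  rw [Matrix.mul_assoc, det_one_add_mul_comm, Matrix.mul_assoc,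
    CFC.sqrt_mul_sqrt_self A hA.nonneg, det_one_add_mul_comm]

theorem PosSemidef.sqrt_mul_mul_sqrt {A B : Matrix n n ℂ} (hB : B.PosSemidef) :
    (CFC.sqrt A * B * CFC.sqrt A).PosSemidef := by
  simpa [(CFC.sqrt_nonneg A).posSemidef.1.eq] using hB.conjTranspose_mul_mul_same (CFC.sqrt A)

theorem PosDef.det_le_det_add {P D : Matrix n n ℂ} (hP : P.PosDef) (hD : D.PosSemidef) :
    P.det ≤ (P + D).det := by
  have hfactor : P + D = (1 + D * P⁻¹) * P := by
    rw [add_mul, one_mul, Matrix.mul_assoc, nonsing_inv_mul _ hP.det_pos.ne'.isUnit, mul_one]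
  rw [hfactor, det_mul, ← hD.det_one_add_sqrt_mul_mul_sqrt]
  exact le_mul_of_one_le_left hP.det_pos.le hP.inv.posSemidef.sqrt_mul_mul_sqrt.one_le_det_one_add

theorem PosDef.det_le_det_of_le {P Q : Matrix n n ℂ} (hP : P.PosDef) (hPQ : P ≤ Q) :
    P.det ≤ Q.det := by
  simpa using hP.det_le_det_add (le_iff.mp hPQ)

theorem PosDef.inv_le_inv_of_le {P Q : Matrix n n ℂ} (hP : P.PosDef) (hPQ : P ≤ Q) :
    Q⁻¹ ≤ P⁻¹ := by
  open scoped Matrix.Norms.L2Operator in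
  simpa [coe_units_inv] using CStarAlgebra.inv_le_inv (a := hP.isUnit.unit)
    (b := (hP.of_le hPQ).isUnit.unit) hP.posSemidef.nonneg hPQ

theorem one_le_det_one_add_mul_inv {A Ω : Matrix n n ℂ} (hA : A.PosSemidef) (hΩ : Ω.PosDef) :
    1 ≤ (1 + A * Ω⁻¹).det := by
  rw [← hA.det_one_add_sqrt_mul_mul_sqrt]
  exact hΩ.inv.posSemidef.sqrt_mul_mul_sqrt.one_le_det_one_add

theorem det_one_add_mul_inv_le_of_le {A Ω Ω' : Matrix n n ℂ} (hA : A.PosSemidef)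
    (hΩ : Ω.PosDef) (hΩΩ' : Ω ≤ Ω') : (1 + A * Ω'⁻¹).det ≤ (1 + A * Ω⁻¹).det := by
  rw [← hA.det_one_add_sqrt_mul_mul_sqrt, ← hA.det_one_add_sqrt_mul_mul_sqrt]
  refine (PosDef.one.add_posSemidef ?_).det_le_det_of_le ?_
  · exact (hΩ.of_le hΩΩ').inv.posSemidef.sqrt_mul_mul_sqrt
  · have h := star_left_conjugate_le_conjugate (hΩ.inv_le_inv_of_le hΩΩ') (CFC.sqrt A)
    rw [(CFC.sqrt_nonneg A).isSelfAdjoint.star_eq] at h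
    exact add_le_add_right h 1

end Matrix

section UpdateSmul

variable {ι : Type*} [DecidableEq ι] {d : ι → Type*} {S : ∀ i, Matrix (d i) (d i) ℂ} {t : ℝ}

theorem posSemidef_update_smul_self (hS : ∀ i, (S i).PosSemidef) (i : ι) (ht : 0 ≤ t) (k : ι) :
    (Function.update S i ((t : ℂ) • S i) k).PosSemidef := by
  rcases eq_or_ne k i with rfl | hk
  · simpa using (hS k).smul (Complex.zero_le_real.mpr ht)
  · simpa [hk] using hS k

theorem update_smul_self_le (hS : ∀ i, (S i).PosSemidef) (i : ι) (ht : t ≤ 1) (k : ι) :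
    Function.update S i ((t : ℂ) • S i) k ≤ S k := by
  rcases eq_or_ne k i with rfl | hk
  · simpa using (hS k).smul_le_self ht
  · simp [hk]

end UpdateSmul

section Network

variable {L : ℕ} {nT nR : Fin L → ℕ} {H : ∀ l k : Fin L, Matrix (Fin (nR l)) (Fin (nT k)) ℂ}
  {Φ : Fin L → Fin L → ℝ} {S S' : ∀ l : Fin L, Matrix (Fin (nT l)) (Fin (nT l)) ℂ}

theorem interfCov_posDef (hΦ : ∀ l k, 0 ≤ Φ l k) (hS : ∀ k, (S k).PosSemidef) (l : Fin L) :
    (interfCov nT nR H Φ S l).PosDef :=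
  PosDef.one.add_posSemidef <| posSemidef_sum _ fun k _ ↦
    ((hS k).mul_mul_conjTranspose_same (H l k)).smul (Complex.zero_le_real.mpr (hΦ l k))

theorem interfCov_mono (hΦ : ∀ l k, 0 ≤ Φ l k) (hS : ∀ k, S' k ≤ S k) (l : Fin L) :
    interfCov nT nR H Φ S' l ≤ interfCov nT nR H Φ S l := by
  have hdiff : interfCov nT nR H Φ S l - interfCov nT nR H Φ S' l
      = ∑ k, (Φ l k : ℂ) • (H l k * (S k - S' k) * (H l k)ᴴ) := by
    simp [interfCov, Matrix.mul_sub, Matrix.sub_mul, smul_sub, Finset.sum_sub_distrib]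
  rw [le_iff, hdiff]
  exact posSemidef_sum _ fun k _ ↦ ((le_iff.mp (hS k)).mul_mul_conjTranspose_same (H l k)).smul
    (Complex.zero_le_real.mpr (hΦ l k))

theorem linkRate_le_linkRate_of_le (hΦ : ∀ l k, 0 ≤ Φ l k) (hS' : ∀ k, (S' k).PosSemidef)
    (hS : ∀ k, S' k ≤ S k) {l : Fin L} (hl : S' l = S l) :
    linkRate nT nR H Φ S l ≤ linkRate nT nR H Φ S' l := by
  have hA := (hS' l).mul_mul_conjTranspose_same (H l l)
  have hΩ := interfCov_posDef (H := H) hΦ hS' l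
  have hΩle := interfCov_mono (H := H) hΦ hS l
  unfold linkRate
  rw [← hl]
  refine Real.log_le_log ?_ (Complex.re_le_re (det_one_add_mul_inv_le_of_le hA hΩ hΩle))
  exact one_pos.trans_le (Complex.re_le_re (one_le_det_one_add_mul_inv hA (hΩ.of_le hΩle)))

theorem interfCov_update_self {l : Fin L} (hΦl : Φ l l = 0)
    (M : Matrix (Fin (nT l)) (Fin (nT l)) ℂ) :
    interfCov nT nR H Φ (Function.update S l M) l = interfCov nT nR H Φ S l := by
  unfold interfCov
  congr 1
  refine Finset.sum_congr rfl fun k _ ↦ ?_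
  rcases eq_or_ne k l with rfl | hk
  · simp [hΦl]
  · rw [Function.update_of_ne hk]

theorem linkRate_update_self {l : Fin L} (hΦl : Φ l l = 0)
    (M : Matrix (Fin (nT l)) (Fin (nT l)) ℂ) :
    linkRate nT nR H Φ (Function.update S l M) l
      = Real.log ((1 + H l l * M * (H l l)ᴴ * (interfCov nT nR H Φ S l)⁻¹).det.re) := by
  rw [linkRate, interfCov_update_self hΦl, Function.update_self]

theorem continuousAt_linkRate_update_smul_self (hΦ : ∀ l k, 0 ≤ Φ l k)
    (hS : ∀ k, (S k).PosSemidef) {l : Fin L} (hΦl : Φ l l = 0) :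
    ContinuousAt (fun t : ℝ ↦ linkRate nT nR H Φ (Function.update S l ((t : ℂ) • S l)) l) 1 := by
  simp_rw [linkRate_update_self hΦl]
  refine ContinuousAt.log (by fun_prop) (ne_of_gt ?_)
  have hA := (hS l).mul_mul_conjTranspose_same (H l l)
  simpa using one_pos.trans_le (Complex.re_le_re
    (one_le_det_one_add_mul_inv hA (interfCov_posDef (H := H) hΦ hS l)))

theorem linkRate_eq_zero_of_eq_zero {l : Fin L} (hl : S l = 0) : linkRate nT nR H Φ S l = 0 := by
  simp [linkRate, hl]

theorem sum_trace_update {l : Fin L} (M : Matrix (Fin (nT l)) (Fin (nT l)) ℂ) :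
    ∑ k, (Function.update S l M k).trace = ∑ k, (S k).trace + (M.trace - (S l).trace) := by
  rw [← Finset.add_sum_erase _ _ (Finset.mem_univ l),
    ← Finset.add_sum_erase _ _ (Finset.mem_univ l),
    Finset.sum_congr rfl fun k hk ↦ by rw [Function.update_of_ne (Finset.ne_of_mem_erase hk)],
    Function.update_self]
  ring

end Network

theorem spmp_constraints_tight_general {L : ℕ} (nT nR : Fin L → ℕ)
    (H : ∀ l k : Fin L, Matrix (Fin (nR l)) (Fin (nT k)) ℂ)
    (Φ : Fin L → Fin L → ℝ)
    (hΦ01 : ∀ l k, Φ l k = 0 ∨ Φ l k = 1) (hΦdiag : ∀ l, Φ l l = 0)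
    (I0 : Fin L → ℝ) (hI0 : ∀ l, 0 < I0 l)
    (St : ∀ l : Fin L, Matrix (Fin (nT l)) (Fin (nT l)) ℂ)
    (hpsd : ∀ l, (St l).PosSemidef)
    (hfeas : ∀ l, I0 l ≤ linkRate nT nR H Φ St l)
    (hopt : ∀ S : ∀ l : Fin L, Matrix (Fin (nT l)) (Fin (nT l)) ℂ,
      (∀ l, (S l).PosSemidef) → (∀ l, I0 l ≤ linkRate nT nR H Φ S l) →
      (∑ l : Fin L, (St l).trace).re ≤ (∑ l : Fin L, (S l).trace).re) :
    ∀ l : Fin L, linkRate nT nR H Φ St l = I0 l := by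
  have hΦ : ∀ l k, 0 ≤ Φ l k := fun l k ↦ (hΦ01 l k).elim (·.ge) (·.symm ▸ zero_le_one)
  intro l₀
  by_contra hne
  have hlt : I0 l₀ < linkRate nT nR H Φ St l₀ := (hfeas l₀).lt_of_ne (Ne.symm hne)
  set S : ℝ → ∀ l, Matrix (Fin (nT l)) (Fin (nT l)) ℂ :=
    fun t ↦ Function.update St l₀ ((t : ℂ) • St l₀) with hS
  obtain ⟨t, hrate, ht0, ht1⟩ : ∃ t : ℝ, I0 l₀ < linkRate nT nR H Φ (S t) l₀ ∧ 0 < t ∧ t < 1 := by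
    have hS1 : S 1 = St := by simp [hS]
    have hcont := continuousAt_linkRate_update_smul_self (H := H) hΦ hpsd (hΦdiag l₀)
    rw [← hS1] at hlt
    exact ((hcont.eventually (lt_mem_nhds hlt)).filter_mono nhdsWithin_le_nhds |>.and
      (Ioo_mem_nhdsLT one_pos)).exists
  have hpsdS := posSemidef_update_smul_self hpsd l₀ ht0.le
  have hle := update_smul_self_le hpsd l₀ ht1.le
  have hfeasS : ∀ k, I0 k ≤ linkRate nT nR H Φ (S t) k := by
    intro k
    rcases eq_or_ne k l₀ with rfl | hk
    · exact hrate.le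
    · exact (hfeas k).trans
        (linkRate_le_linkRate_of_le hΦ hpsdS hle (Function.update_of_ne hk _ _))
  have htrace : 0 < (St l₀).trace.re := (hpsd l₀).trace_re_pos fun h0 ↦
    (hI0 l₀).not_ge (linkRate_eq_zero_of_eq_zero (H := H) (Φ := Φ) h0 ▸ hfeas l₀)
  have hpower := hopt (S t) hpsdS hfeasS
  simp only [hS, sum_trace_update, trace_smul, smul_eq_mul, Complex.add_re, Complex.sub_re,
    Complex.re_ofReal_mul] at hpower
  nlinarith

/-- At any optimum of the sum power minimization problem SPMP (minimizing the
total transmit power subject to the rate constraints `I_l ≥ I_l⁰ > 0`), all rate constraints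
are tight: `I_l(Σ̃_{1:L}, Φ) = I_l⁰` for every link `l`. -/
theorem spmp_constraints_tight {L : ℕ} (hL : 0 < L) (nT nR : Fin L → ℕ)
    (H : ∀ l k : Fin L, Matrix (Fin (nR l)) (Fin (nT k)) ℂ)
    (Φ : Fin L → Fin L → ℝ)
    (hΦ01 : ∀ l k, Φ l k = 0 ∨ Φ l k = 1) (hΦdiag : ∀ l, Φ l l = 0)
    (I0 : Fin L → ℝ) (hI0 : ∀ l, 0 < I0 l)
    (St : ∀ l : Fin L, Matrix (Fin (nT l)) (Fin (nT l)) ℂ)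
    (hpsd : ∀ l, (St l).PosSemidef)
    (hfeas : ∀ l, I0 l ≤ linkRate nT nR H Φ St l)
    (hopt : ∀ S : ∀ l : Fin L, Matrix (Fin (nT l)) (Fin (nT l)) ℂ,
      (∀ l, (S l).PosSemidef) → (∀ l, I0 l ≤ linkRate nT nR H Φ S l) →
      (∑ l : Fin L, (St l).trace).re ≤ (∑ l : Fin L, (S l).trace).re) :
    ∀ l : Fin L, linkRate nT nR H Φ St l = I0 l :=
  spmp_constraints_tight_general nT nR H Φ hΦ01 hΦdiag I0 hI0 St hpsd hfeas hopt
end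

section
/- Let I_l^0 > 0 be target rates, P_T > 0, and let ν_1,…,ν_L ≥ 0 be weights with ∑_l ν_l I_l^0 > 0. Suppose Σ̃_{1:L} is a family of positive semidefinite input covariance matrices with ∑_l Tr(Σ̃_l) ≤ P_T that maximizes the weighted sum rate ∑_l ν_l I_l(Σ_{1:L}, Φ) over all positive semidefinite Σ_{1:L} with ∑_l Tr(Σ_l) ≤ P_T, and that moreover satisfies I_l(Σ̃_{1:L}, Φ) = α I_l^0 for every l and some α ≥ 0. Then Σ̃_{1:L} is a global optimum of the feasibility optimization problem FOP: for every positive semidefinite Σ_{1:L} with ∑_l Tr(Σ_l) ≤ P_T one has min_{1≤l≤L} I_l(Σ_{1:L}, Φ)/I_l^0 ≤ α = min_{1≤l≤L} I_l(Σ̃_{1:L}, Φ)/I_l^0. -/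
open Matrix BigOperators
open scoped ComplexOrder

/-! The minimum of the normalized rates `I_l(Σ)/I_l⁰`, times `∑ ν_l I_l⁰`, is a lower bound for
the weighted sum rate of `Σ`; this is at most the weighted sum rate of `Σ̃`, which equals
`α ∑ ν_l I_l⁰` because the rates of `Σ̃` are proportional to the targets. -/

section

variable {ι : Type*} [Fintype ι]

theorem iInf_div_mul_sum_le_sum_mul {r c ν : ι → ℝ} (hc : ∀ i, 0 < c i) (hν : ∀ i, 0 ≤ ν i) :
    (⨅ i, r i / c i) * ∑ i, ν i * c i ≤ ∑ i, ν i * r i := by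
  rw [Finset.mul_sum]
  refine Finset.sum_le_sum fun i _ => ?_
  have hmin : (⨅ j, r j / c j) * c i ≤ r i :=
    (le_div_iff₀ (hc i)).mp (ciInf_le (Finite.bddBelow_range _) i)
  rw [mul_left_comm]
  exact mul_le_mul_of_nonneg_left hmin (hν i)

theorem iInf_div_le_of_sum_mul_le {r c ν : ι → ℝ} {α : ℝ} (hc : ∀ i, 0 < c i)
    (hν : ∀ i, 0 ≤ ν i) (hνc : 0 < ∑ i, ν i * c i)
    (hle : ∑ i, ν i * r i ≤ ∑ i, ν i * (α * c i)) :
    ⨅ i, r i / c i ≤ α := by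
  refine le_of_mul_le_mul_right ?_ hνc
  calc (⨅ i, r i / c i) * ∑ i, ν i * c i ≤ ∑ i, ν i * r i := iInf_div_mul_sum_le_sum_mul hc hν
    _ ≤ ∑ i, ν i * (α * c i) := hle
    _ = α * ∑ i, ν i * c i := by rw [Finset.mul_sum]; congr 1; ext i; ring

end

theorem iInf_mul_div_self {ι : Type*} [Nonempty ι] {c : ι → ℝ} (hc : ∀ i, c i ≠ 0) (α : ℝ) :
    ⨅ i, α * c i / c i = α := by
  simp only [mul_div_assoc, div_self (hc _), mul_one, ciInf_const]

theorem wsr_opt_implies_fop_opt_general {L : ℕ} (hL : 0 < L) (nT nR : Fin L → ℕ)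
    (H : ∀ l k : Fin L, Matrix (Fin (nR l)) (Fin (nT k)) ℂ)
    (Φ : Fin L → Fin L → ℝ)
    (I0 : Fin L → ℝ) (hI0 : ∀ l, 0 < I0 l)
    (PT : ℝ)
    (ν : Fin L → ℝ) (hν : ∀ l, 0 ≤ ν l) (hνI0 : 0 < ∑ l : Fin L, ν l * I0 l)
    (St : ∀ l : Fin L, Matrix (Fin (nT l)) (Fin (nT l)) ℂ)
    (α : ℝ)
    (hrates : ∀ l, linkRate nT nR H Φ St l = α * I0 l)
    (hwsr : ∀ S : ∀ l : Fin L, Matrix (Fin (nT l)) (Fin (nT l)) ℂ,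
      (∀ l, (S l).PosSemidef) → (∑ l : Fin L, (S l).trace).re ≤ PT →
      ∑ l : Fin L, ν l * linkRate nT nR H Φ S l ≤
        ∑ l : Fin L, ν l * linkRate nT nR H Φ St l) :
    (∀ S : ∀ l : Fin L, Matrix (Fin (nT l)) (Fin (nT l)) ℂ,
      (∀ l, (S l).PosSemidef) → (∑ l : Fin L, (S l).trace).re ≤ PT →
      (⨅ l : Fin L, linkRate nT nR H Φ S l / I0 l) ≤ α) ∧
    α = ⨅ l : Fin L, linkRate nT nR H Φ St l / I0 l := by
  have : Nonempty (Fin L) := ⟨⟨0, hL⟩⟩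
  refine ⟨fun S hS hpow => ?_, ?_⟩
  · refine iInf_div_le_of_sum_mul_le hI0 hν hνI0 ?_
    simpa only [hrates] using hwsr S hS hpow
  · simp only [hrates]
    exact (iInf_mul_div_self (fun l => (hI0 l).ne') α).symm

/-- If `Σ̃_{1:L}` maximizes the weighted sum rate `∑ ν_l I_l` (with nonnegative
weights `ν`, `∑ ν_l I_l⁰ > 0`) under the sum power constraint `P_T`, and its rates are
proportional to the targets, `I_l(Σ̃,Φ) = α I_l⁰` for all `l`, then `Σ̃_{1:L}` is a global
optimum of FOP: every feasible `Σ_{1:L}` satisfies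
`min_l I_l(Σ,Φ)/I_l⁰ ≤ α = min_l I_l(Σ̃,Φ)/I_l⁰`. -/
theorem wsr_opt_implies_fop_opt {L : ℕ} (hL : 0 < L) (nT nR : Fin L → ℕ)
    (H : ∀ l k : Fin L, Matrix (Fin (nR l)) (Fin (nT k)) ℂ)
    (Φ : Fin L → Fin L → ℝ)
    (hΦ01 : ∀ l k, Φ l k = 0 ∨ Φ l k = 1) (hΦdiag : ∀ l, Φ l l = 0)
    (I0 : Fin L → ℝ) (hI0 : ∀ l, 0 < I0 l)
    (PT : ℝ) (hPT : 0 < PT)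
    (ν : Fin L → ℝ) (hν : ∀ l, 0 ≤ ν l) (hνI0 : 0 < ∑ l : Fin L, ν l * I0 l)
    (St : ∀ l : Fin L, Matrix (Fin (nT l)) (Fin (nT l)) ℂ)
    (hpsd : ∀ l, (St l).PosSemidef)
    (hpow : (∑ l : Fin L, (St l).trace).re ≤ PT)
    (α : ℝ) (hα : 0 ≤ α)
    (hrates : ∀ l, linkRate nT nR H Φ St l = α * I0 l)
    (hwsr : ∀ S : ∀ l : Fin L, Matrix (Fin (nT l)) (Fin (nT l)) ℂ,
      (∀ l, (S l).PosSemidef) → (∑ l : Fin L, (S l).trace).re ≤ PT →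
      ∑ l : Fin L, ν l * linkRate nT nR H Φ S l ≤
        ∑ l : Fin L, ν l * linkRate nT nR H Φ St l) :
    (∀ S : ∀ l : Fin L, Matrix (Fin (nT l)) (Fin (nT l)) ℂ,
      (∀ l, (S l).PosSemidef) → (∑ l : Fin L, (S l).trace).re ≤ PT →
      (⨅ l : Fin L, linkRate nT nR H Φ S l / I0 l) ≤ α) ∧
    α = ⨅ l : Fin L, linkRate nT nR H Φ St l / I0 l :=
  wsr_opt_implies_fop_opt_general hL nT nR H Φ I0 hI0 PT ν hν hνI0 St α hrates hwsr
end

section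
/- Let H ∈ ℂ^{r×n}, let Ω ∈ ℂ^{r×r} be positive definite, and let x_1, …, x_M ∈ ℂ^n be arbitrary vectors. Then ∑_{m=1}^M log(1 + x_m† H† (Ω + ∑_{i=m+1}^M H x_i x_i† H†)^{-1} H x_m) = log det(I + H (∑_{m=1}^M x_m x_m†) H† Ω^{-1}). In words: when an input covariance matrix Σ = ∑_m x_m x_m† is decomposed into streams that are decoded by MMSE filtering with successive interference cancellation in the order m = 1,…,M, the sum of the per-stream rates log(1 + SINR_m) equals the mutual information log det(I + H Σ H† Ω^{-1}) of the link; i.e., the decomposition is information lossless. -/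
/-!
Write `Ω_k = Ω + ∑_{i ≥ k} (H x_i)(H x_i)ᴴ`, so `Ω_k = Ω_{k+1} + (H x_k)(H x_k)ᴴ`. By the matrix
determinant lemma `det Ω_k = det Ω_{k+1} · (1 + SINR_k)`, hence `log (1 + SINR_k)` is the increment
`log det Ω_k - log det Ω_{k+1}`, and the sum telescopes to `log det Ω_1 - log det Ω`, which is
`log det (I + H Σ Hᴴ Ω⁻¹)` because `I + H Σ Hᴴ Ω⁻¹ = Ω_1 Ω⁻¹`. All determinants involved are positive
reals, so taking real parts commutes with the logarithm rules.
-/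

open Matrix
open scoped ComplexOrder

theorem Complex.log_re_div {z w : ℂ} (hz : 0 < z) (hw : 0 < w) :
    Real.log (z / w).re = Real.log z.re - Real.log w.re := by
  obtain ⟨a, ha, rfl⟩ := RCLike.pos_iff_exists_ofReal.mp hz
  obtain ⟨b, hb, rfl⟩ := RCLike.pos_iff_exists_ofReal.mp hw
  simp [Real.log_div ha.ne' hb.ne']

namespace Matrix

variable {m : Type*} [Fintype m]

theorem mul_vecMulVec_star_mul_conjTranspose {l α : Type*} [CommSemiring α] [StarRing α]
    (H : Matrix l m α) (v : m → α) :
    H * vecMulVec v (star v) * Hᴴ = vecMulVec (H *ᵥ v) (star (H *ᵥ v)) := by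
  rw [mul_vecMulVec, vecMulVec_mul, star_mulVec]

variable [DecidableEq m]

theorem det_add_vecMulVec {α : Type*} [CommRing α] {A : Matrix m m α} (hA : IsUnit A.det)
    (u v : m → α) : (A + vecMulVec u v).det = A.det * (1 + v ⬝ᵥ A⁻¹ *ᵥ u) := by
  rw [vecMulVec_eq Unit, det_add_replicateCol_mul_replicateRow hA, Matrix.mul_assoc,
    ← replicateCol_mulVec, det_unique (1 + replicateRow Unit v * replicateCol Unit (A⁻¹ *ᵥ u)),
    add_apply, one_apply_eq, replicateRow_mul_replicateCol_apply]

theorem PosDef.log_det_re_add_vecMulVec {A : Matrix m m ℂ} (hA : A.PosDef) (v : m → ℂ) :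
    Real.log (A + vecMulVec v (star v)).det.re - Real.log A.det.re
      = Real.log (1 + (star v ⬝ᵥ A⁻¹ *ᵥ v).re) := by
  have hdetA := hA.det_pos
  rw [← Complex.log_re_div ((hA.add_posSemidef (posSemidef_vecMulVec_self_star v)).det_pos)
    hdetA, det_add_vecMulVec hdetA.ne'.isUnit, mul_div_cancel_left₀ _ hdetA.ne', Complex.add_re,
    Complex.one_re]

theorem PosDef.log_det_re_one_add_mul_inv {Ω S : Matrix m m ℂ} (hΩ : Ω.PosDef)
    (hS : S.PosSemidef) :
    Real.log (1 + S * Ω⁻¹).det.re = Real.log (Ω + S).det.re - Real.log Ω.det.re := by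
  have hdetΩ := hΩ.det_pos
  have hfactor : 1 + S * Ω⁻¹ = (Ω + S) * Ω⁻¹ := by
    rw [add_mul, mul_nonsing_inv _ hdetΩ.ne'.isUnit]
  rw [hfactor, det_mul, det_nonsing_inv, Ring.inverse_eq_inv', ← div_eq_mul_inv,
    Complex.log_re_div (hΩ.add_posSemidef hS).det_pos hdetΩ]

theorem PosDef.sum_log_one_add_sinr {M : ℕ} {Ω : Matrix m m ℂ} (hΩ : Ω.PosDef)
    (v : Fin M → m → ℂ) :
    ∑ k : Fin M, Real.log (1 + (star (v k) ⬝ᵥ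
        ((Ω + ∑ i ∈ Finset.Ioi k, vecMulVec (v i) (star (v i)))⁻¹ *ᵥ v k)).re)
      = Real.log (Ω + ∑ k, vecMulVec (v k) (star (v k))).det.re - Real.log Ω.det.re := by
  induction M with
  | zero => simp
  | succ M ih =>
    have hA : (Ω + ∑ k : Fin M, vecMulVec (v k.succ) (star (v k.succ))).PosDef :=
      hΩ.add_posSemidef (posSemidef_sum _ fun k _ => posSemidef_vecMulVec_self_star _)
    rw [Fin.sum_univ_succ, Fin.sum_Ioi_zero]
    simp only [Fin.sum_Ioi_succ]
    rw [ih (fun k => v k.succ), ← hA.log_det_re_add_vecMulVec, Fin.sum_univ_succ,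
      add_left_comm, add_comm (vecMulVec (v 0) (star (v 0)))]
    ring

end Matrix

/-- For any stream decomposition `x_1, …, x_M` of an input covariance matrix
`Σ = ∑ₘ xₘ xₘᴴ` over a channel `H` with positive definite interference-plus-noise covariance
`Ω`, MMSE-SIC decoding in the order `m = 1, …, M` is information lossless: the sum of the
per-stream rates `log(1 + SINR_m)` equals the mutual information `log det(I + H Σ Hᴴ Ω⁻¹)`. -/
theorem mmse_sic_information_lossless {r n : ℕ} (M : ℕ)
    (H : Matrix (Fin r) (Fin n) ℂ)
    (Ω : Matrix (Fin r) (Fin r) ℂ) (hΩ : Ω.PosDef)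
    (x : Fin M → (Fin n → ℂ)) :
    ∑ m : Fin M,
        Real.log (1 +
          (star (H *ᵥ x m) ⬝ᵥ
            (((Ω + ∑ i ∈ Finset.Ioi m,
                H * vecMulVec (x i) (star (x i)) * Hᴴ)⁻¹) *ᵥ (H *ᵥ x m))).re)
      = Real.log
          ((1 + H * (∑ m : Fin M, vecMulVec (x m) (star (x m))) * Hᴴ * Ω⁻¹).det.re) := by
  have hS : H * (∑ m, vecMulVec (x m) (star (x m))) * Hᴴ
      = ∑ m, vecMulVec (H *ᵥ x m) (star (H *ᵥ x m)) := by
    simp only [Matrix.mul_sum, Matrix.sum_mul, mul_vecMulVec_star_mul_conjTranspose]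
  simp only [mul_vecMulVec_star_mul_conjTranspose]
  rw [hΩ.sum_log_one_add_sinr, hS, hΩ.log_det_re_one_add_mul_inv
    (posSemidef_sum _ fun m _ => posSemidef_vecMulVec_self_star _)]
end

section
/- For every family of positive semidefinite input covariance matrices Σ_{1:L} and every real c ≥ 1, scaling all covariance matrices by c does not decrease any link rate: I_l(c·Σ_{1:L}, Φ) ≥ I_l(Σ_{1:L}, Φ) for every l = 1,…,L, where c·Σ_{1:L} = (cΣ_1,…,cΣ_L). -/
open Matrix BigOperators
open scoped ComplexOrder

/-!
Write `G = H_{l,l} Σ_l H_{l,l}ᴴ` and `M` for the interference sum, so that `Ω_l = 1 + M`.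
Scaling every `Σ_k` by `c` turns `G Ω_l⁻¹` into `c G (1 + c M)⁻¹ = G (c⁻¹ + M)⁻¹`. Since
`c⁻¹ + M ≤ 1 + M` in the Loewner order and inversion is antitone, `(1 + M)⁻¹ ≤ (c⁻¹ + M)⁻¹`; and
`A ↦ det (1 + G A)` is monotone on positive semidefinite `A` because, with `R = √G`, it equals
`det (1 + R A R)` and the determinant is monotone on positive definite matrices.
-/

open scoped MatrixOrder

namespace Matrix

variable {n : Type*} [Fintype n] [DecidableEq n]

section RCLike

variable {𝕜 : Type*} [RCLike 𝕜]

lemma one_le_det_of_one_le {A : Matrix n n 𝕜} (hA : 1 ≤ A) : 1 ≤ A.det := by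
  have hAh : A.IsHermitian := by simpa using (le_iff.mp hA).isHermitian.add isHermitian_one
  have hspec : ∀ x ∈ spectrum ℝ A, 1 ≤ x :=
    (algebraMap_le_iff_le_spectrum (a := A) (r := 1) hAh.isSelfAdjoint).mp (by simpa using hA)
  rw [hAh.det_eq_prod_eigenvalues]
  refine Finset.one_le_prod fun i _ => ?_
  exact_mod_cast hspec _ (hAh.spectrum_real_eq_range_eigenvalues ▸ Set.mem_range_self i)

lemma det_le_det_of_le {A B : Matrix n n 𝕜} (hA : A.PosDef) (hAB : A ≤ B) : A.det ≤ B.det := by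
  set T := CFC.sqrt A⁻¹
  have hT : T.IsHermitian := (CFC.sqrt_nonneg A⁻¹).posSemidef.isHermitian
  have hTT : T * T = A⁻¹ := CFC.sqrt_mul_sqrt_self _ hA.inv.posSemidef.nonneg
  have hB : B = A * (1 + T * T * (B - A)) := by
    rw [hTT, mul_add, mul_one, ← Matrix.mul_assoc, mul_nonsing_inv _ hA.det_pos.ne'.isUnit, one_mul]
    abel
  have hone : 1 ≤ 1 + T * (B - A) * T := by
    simpa [hT.eq] using (le_iff.mp hAB).mul_mul_conjTranspose_same T |>.nonneg
  calc A.det ≤ A.det * (1 + T * (B - A) * T).det :=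
        le_mul_of_one_le_right hA.det_pos.le (one_le_det_of_one_le hone)
    _ = B.det := by
      conv_rhs => rw [hB, det_mul, Matrix.mul_assoc, det_one_add_mul_comm, Matrix.mul_assoc]
      rw [Matrix.mul_assoc]

lemma det_one_add_mul_le_of_le {G A B : Matrix n n 𝕜} (hG : 0 ≤ G) (hA : 0 ≤ A)
    (hAB : A ≤ B) : (1 + G * A).det ≤ (1 + G * B).det := by
  set R := CFC.sqrt G
  have hR : R.IsHermitian := (CFC.sqrt_nonneg G).posSemidef.isHermitian
  have hconj : ∀ X : Matrix n n 𝕜, (1 + G * X).det = (1 + R * X * R).det := fun X => by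
    rw [← CFC.sqrt_mul_sqrt_self G hG, Matrix.mul_assoc, det_one_add_mul_comm, Matrix.mul_assoc]
  have hApd : (1 + R * A * R).PosDef := by
    simpa [hR.eq] using
      PosDef.one.add_posSemidef ((nonneg_iff_posSemidef.mp hA).mul_mul_conjTranspose_same R)
  rw [hconj, hconj]
  refine det_le_det_of_le hApd (add_le_add_right ?_ 1)
  simpa [hR.isSelfAdjoint.star_eq] using star_left_conjugate_le_conjugate hAB R

end RCLike

/-- Here `det (1 + G A)` is a real number `≥ 1`, so neither `re` nor `Real.log` loses
information. -/
lemma log_re_det_one_add_mul_le_of_le {G A B : Matrix n n ℂ} (hG : 0 ≤ G) (hA : 0 ≤ A)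
    (hAB : A ≤ B) : Real.log (1 + G * A).det.re ≤ Real.log (1 + G * B).det.re := by
  have hone : 1 ≤ (1 + G * A).det := by simpa using det_one_add_mul_le_of_le hG le_rfl hA
  exact Real.log_le_log (zero_lt_one.trans_le (Complex.le_def.mp hone).1)
    (Complex.le_def.mp (det_one_add_mul_le_of_le hG hA hAB)).1

lemma smul_mul_inv_one_add_smul {K : Type*} [Field K] {c : K} (hc : c ≠ 0) (G M : Matrix n n K) :
    (c • G) * (1 + c • M)⁻¹ = G * (c⁻¹ • 1 + M)⁻¹ := by
  have hfac : 1 + c • M = c • (c⁻¹ • 1 + M) := by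
    rw [smul_add, smul_smul, mul_inv_cancel₀ hc, one_smul]
  by_cases hX : IsUnit (c⁻¹ • 1 + M).det
  · have := invertibleOfNonzero hc
    rw [hfac, inv_smul _ c hX, invOf_eq_inv, Matrix.smul_mul, Matrix.mul_smul, smul_smul,
      mul_inv_cancel₀ hc, one_smul]
  · have hcX : ¬IsUnit (c • (c⁻¹ • 1 + M)).det := fun h =>
      hX (IsUnit.mul_iff.mp (det_smul (c⁻¹ • 1 + M) c ▸ h)).2
    rw [hfac, nonsing_inv_apply_not_isUnit _ hX, nonsing_inv_apply_not_isUnit _ hcX]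
    simp

open scoped Matrix.Norms.L2Operator in
lemma inv_le_inv_of_le {A B : Matrix n n ℂ} (hA : A.PosDef) (hAB : A ≤ B) : B⁻¹ ≤ A⁻¹ := by
  have hB : B.PosDef := by simpa using hA.add_posSemidef (le_iff.mp hAB)
  simpa using CStarAlgebra.inv_le_inv (a := hA.isUnit.unit) (b := hB.isUnit.unit)
    hA.posSemidef.nonneg hAB

end Matrix

section Network

variable {L : ℕ} (nT nR : Fin L → ℕ) (H : ∀ l k : Fin L, Matrix (Fin (nR l)) (Fin (nT k)) ℂ)
  (Φ : Fin L → Fin L → ℝ)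

noncomputable def interference (S : ∀ l : Fin L, Matrix (Fin (nT l)) (Fin (nT l)) ℂ) (l : Fin L) :
    Matrix (Fin (nR l)) (Fin (nR l)) ℂ :=
  ∑ k : Fin L, (Φ l k : ℂ) • (H l k * S k * (H l k)ᴴ)

variable {nT nR H Φ}

lemma interfCov_eq_one_add_interference (S : ∀ l : Fin L, Matrix (Fin (nT l)) (Fin (nT l)) ℂ)
    (l : Fin L) : interfCov nT nR H Φ S l = 1 + interference nT nR H Φ S l :=
  rfl

lemma interference_smul (S : ∀ l : Fin L, Matrix (Fin (nT l)) (Fin (nT l)) ℂ) (a : ℂ) (l : Fin L) :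
    interference nT nR H Φ (fun k => a • S k) l = a • interference nT nR H Φ S l := by
  simp only [interference, Finset.smul_sum, Matrix.mul_smul, Matrix.smul_mul, smul_comm a]

lemma interference_nonneg {S : ∀ l : Fin L, Matrix (Fin (nT l)) (Fin (nT l)) ℂ}
    (hS : ∀ k, (S k).PosSemidef) {l : Fin L} (hΦ : ∀ k, 0 ≤ Φ l k) :
    0 ≤ interference nT nR H Φ S l :=
  Finset.sum_nonneg fun k _ => nonneg_iff_posSemidef.mpr <|
    ((hS k).mul_mul_conjTranspose_same (H l k)).smul (by exact_mod_cast hΦ k)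

end Network

theorem power_scaling_monotone_general {L : ℕ} (nT nR : Fin L → ℕ)
    (H : ∀ l k : Fin L, Matrix (Fin (nR l)) (Fin (nT k)) ℂ)
    (Φ : Fin L → Fin L → ℝ)
    (hΦ01 : ∀ l k, Φ l k = 0 ∨ Φ l k = 1)
    (S : ∀ l : Fin L, Matrix (Fin (nT l)) (Fin (nT l)) ℂ)
    (hS : ∀ l, (S l).PosSemidef)
    (c : ℝ) (hc : 1 ≤ c) :
    ∀ l : Fin L, linkRate nT nR H Φ S l ≤ linkRate nT nR H Φ (fun k => (c : ℂ) • S k) l := by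
  intro l
  set M := interference nT nR H Φ S l
  set G := H l l * S l * (H l l)ᴴ
  have hG : 0 ≤ G := ((hS l).mul_mul_conjTranspose_same (H l l)).nonneg
  have hM : M.PosSemidef := nonneg_iff_posSemidef.mp <|
    interference_nonneg hS fun k => by rcases hΦ01 l k with h | h <;> simp [h]
  have hc_pos : (0 : ℂ) < c := by exact_mod_cast zero_lt_one.trans_le hc
  have hscaled : linkRate nT nR H Φ (fun k => (c : ℂ) • S k) l =
      Real.log (1 + G * ((c : ℂ)⁻¹ • 1 + M)⁻¹).det.re := by
    rw [linkRate, interfCov_eq_one_add_interference, interference_smul, Matrix.mul_smul,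
      Matrix.smul_mul, smul_mul_inv_one_add_smul hc_pos.ne']
  have hc_inv : (c : ℂ)⁻¹ • (1 : Matrix (Fin (nR l)) (Fin (nR l)) ℂ) ≤ 1 :=
    smul_le_of_le_one_left zero_le_one (by exact_mod_cast inv_le_one_of_one_le₀ hc)
  have hinv : (1 + M)⁻¹ ≤ ((c : ℂ)⁻¹ • 1 + M)⁻¹ :=
    inv_le_inv_of_le ((PosDef.one.smul (inv_pos.mpr hc_pos)).add_posSemidef hM)
      (add_le_add_left hc_inv M)
  rw [hscaled, linkRate, interfCov_eq_one_add_interference]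
  exact log_re_det_one_add_mul_le_of_le hG (PosDef.one.add_posSemidef hM).inv.posSemidef.nonneg hinv

/-- Scaling all input covariance matrices by a common factor `c ≥ 1` does not
decrease any link rate in a B-MAC network. -/
theorem power_scaling_monotone {L : ℕ} (hL : 0 < L) (nT nR : Fin L → ℕ)
    (H : ∀ l k : Fin L, Matrix (Fin (nR l)) (Fin (nT k)) ℂ)
    (Φ : Fin L → Fin L → ℝ)
    (hΦ01 : ∀ l k, Φ l k = 0 ∨ Φ l k = 1) (hΦdiag : ∀ l, Φ l l = 0)
    (S : ∀ l : Fin L, Matrix (Fin (nT l)) (Fin (nT l)) ℂ)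
    (hS : ∀ l, (S l).PosSemidef)
    (c : ℝ) (hc : 1 ≤ c) :
    ∀ l : Fin L, linkRate nT nR H Φ S l ≤ linkRate nT nR H Φ (fun k => (c : ℂ) • S k) l :=
  power_scaling_monotone_general nT nR H Φ hΦ01 S hS c hc
end
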